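/- Let μ ≥ 1, ℓ ≥ 0, m ≥ 0 be integers with gcd(2ℓ+2, 2m+1) = 1, set M = 4ℓ + 2m + 5 and σ = 3·(2ℓ+2)²·k. Then for every pair (κ, λ) ∈ {(0,1), (1,1)} and every integer k with gcd(k, M) = 1, one has H_M( q^σ · f((−1)^κ q^{(2m+1)k}, (−1)^κ q^{μM−(2m+1)k})^{2ℓ+2} · f((−1)^λ q^{(4ℓ+4)k}, (−1)^λ q^{2μM−(4ℓ+4)k})^{2m+1} ) = 0. -/

import Mathlib

/-!
Common setup: Ramanujan theta series as formal Laurent series over `ℚ`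
(`LaurentSeries ℚ = HahnSeries ℤ ℚ`), and the huffing operator `H_M`.
-/

noncomputable section

open scoped Classical

namespace ThetaVanish

/-- A subset of `ℤ` that is bounded below is partially well-ordered. -/
theorem isPWO_of_subset_Ici {a : ℤ} {s : Set ℤ} (h : s ⊆ Set.Ici a) : s.IsPWO := by
  have hWF : s.IsWF := by
    rw [Set.isWF_iff_no_descending_seq]
    intro f hf hmem
    have key : ∀ n : ℕ, f n + n ≤ f 0 := by
      intro n
      induction n with
      | zero => simp
      | succ k ih =>
        have h2 : f (k + 1) < f k := hf (Nat.lt_succ_self k)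
        push_cast
        push_cast at ih
        omega
    have h1 := key (f 0 - a + 1).toNat
    have h2 : a ≤ f ((f 0 - a + 1).toNat) := h (hmem _)
    have h3 : a ≤ f 0 := h (hmem 0)
    omega
  exact hWF.isPWO

/-- The coefficient of `q^N` in Ramanujan's theta series `f(ε q^r, ε q^s)`:
the (finite, when `r + s > 0`) sum of `ε^n` over all integers `n` with
`r·n(n+1)/2 + s·n(n-1)/2 = N`. -/
def thetaCoeff (ε r s : ℤ) : ℤ → ℚ := fun N =>
  ∑ᶠ n : ℤ, if r * (n * (n + 1) / 2) + s * (n * (n - 1) / 2) = N then (ε : ℚ) ^ n else 0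

theorem thetaCoeff_support (ε r s : ℤ) (h : 0 < r + s) :
    Function.support (thetaCoeff ε r s) ⊆ Set.Ici (-(r - s) ^ 2) := by
  intro N hN
  simp only [Function.mem_support, ne_eq] at hN
  rw [Set.mem_Ici]
  by_contra hcon
  push_neg at hcon
  apply hN
  apply finsum_eq_zero_of_forall_eq_zero
  intro n
  rw [if_neg]
  intro hQ
  obtain ⟨c, hc⟩ := Int.even_mul_succ_self n
  obtain ⟨e, he⟩ := Int.even_mul_pred_self n
  have hc' : n * (n + 1) = 2 * c := by omega
  have he' : n * (n - 1) = 2 * e := by omega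
  have e1 : n * (n + 1) / 2 = c := by omega
  have e2 : n * (n - 1) / 2 = e := by omega
  rw [e1, e2] at hQ
  have key : 2 * N = (r + s) * n ^ 2 + (r - s) * n := by
    linear_combination -2 * hQ - r * hc' - s * he'
  nlinarith [sq_nonneg (2 * n + r - s), sq_nonneg (r - s),
    mul_nonneg (show (0:ℤ) ≤ r + s - 1 by omega) (sq_nonneg n)]

/-- Ramanujan's theta series `f(ε q^r, ε q^s)` (for a sign `ε ∈ {1, -1}` and
`r + s > 0`), as a formal Laurent series over `ℚ`; junk value `0` if `r + s ≤ 0`. -/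
def theta (ε r s : ℤ) : LaurentSeries ℚ :=
  if h : 0 < r + s then
    { coeff := thetaCoeff ε r s
      isPWO_support' := isPWO_of_subset_Ici (thetaCoeff_support ε r s h) }
  else 0

/-- The huffing operator `H_M`: keep only the coefficients whose index is a
multiple of `M`. -/
def huff (M : ℤ) (G : LaurentSeries ℚ) : LaurentSeries ℚ where
  coeff N := if M ∣ N then G.coeff N else 0
  isPWO_support' := by
    apply Set.IsPWO.mono G.isPWO_support
    intro N hN
    simp only [Function.mem_support, ne_eq] at hN
    rw [HahnSeries.mem_support]
    by_cases hd : M ∣ N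
    · rwa [if_pos hd] at hN
    · exact absurd (if_neg hd) hN


end ThetaVanish

/-!
Put `a = 2ℓ + 2`, `b = 2m + 1`, so that `M = 2a + b`. Expanding the theta series, the product is a
sum of signed monomials indexed by pairs `(x, y) ∈ ℤ^a × ℤ^b`, and twice the exponent of the pair
is `2ak(3a - 2d)` modulo `M`, where `d = Σ x - Σ y`. Since `M` is coprime to `2ak`, only pairs with
`M ∣ 3a - 2d` reach `H_M`. For these write `3a - 2d = M(c + 1)`; then `(x, y) ↦ (x + 2c, y - c)` is
an involution preserving the exponent. As `a` is even and `M` is odd, `c` is odd, so the involution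
fixes `ε^{Σ x}` and, `b` being odd, flips the sign `(-1)^{Σ y}`: the contributions cancel in pairs.
-/

theorem finsum_eq_zero_of_involutive {ι R : Type*} [AddCommGroup R] [IsAddTorsionFree R]
    {f : ι → R} {φ : ι → ι} (hφ : Function.Involutive φ) (hf : ∀ i, f (φ i) = -f i) :
    ∑ᶠ i, f i = 0 := by
  have h := finsum_comp_equiv (hφ.toPerm φ) (f := f)
  simp only [Function.Involutive.coe_toPerm, hf, finsum_neg_distrib] at h
  exact neg_eq_self.mp h

namespace HahnSeries

theorem prod_single {Γ R ι : Type*} [AddCommMonoid Γ] [PartialOrder Γ]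
    [IsOrderedCancelAddMonoid Γ] [CommSemiring R] (s : Finset ι) (e : ι → Γ) (c : ι → R) :
    ∏ i ∈ s, single (e i) (c i) = single (∑ i ∈ s, e i) (∏ i ∈ s, c i) := by
  induction s using Finset.induction_on with
  | empty => rfl
  | insert i s hi ih =>
    rw [Finset.prod_insert hi, ih, single_mul_single, Finset.sum_insert hi, Finset.prod_insert hi]

namespace SummableFamily

variable {Γ R α : Type*}

theorem coeff_hsum_eq_zero_of_involutive [PartialOrder Γ] [AddCommGroup R] [IsAddTorsionFree R]
    (s : SummableFamily Γ R α) {φ : α → α} (hφ : Function.Involutive φ) {g : Γ}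
    (h : ∀ a, (s (φ a)).coeff g = -(s a).coeff g) : s.hsum.coeff g = 0 := by
  rw [coeff_hsum]
  exact finsum_eq_zero_of_involutive hφ h

variable [AddCommMonoid Γ] [PartialOrder Γ] [IsOrderedCancelAddMonoid Γ] [CommSemiring R]

def pow (s : SummableFamily Γ R α) : (n : ℕ) → SummableFamily Γ R (Fin n → α)
  | 0 => const _ 1
  | n + 1 => Equiv (Fin.consEquiv fun _ => α) (s.mul (s.pow n))

theorem pow_apply (s : SummableFamily Γ R α) (n : ℕ) (g : Fin n → α) :
    s.pow n g = ∏ i, s (g i) := by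
  induction n with
  | zero => simp [pow]
  | succ n ih =>
    rw [pow, Equiv_toFun, mul_toFun, ih, Fin.prod_univ_succ]
    rfl

theorem hsum_pow (s : SummableFamily Γ R α) (n : ℕ) : (s.pow n).hsum = s.hsum ^ n := by
  induction n with
  | zero => simp [pow]
  | succ n ih => rw [pow, hsum_equiv, hsum_mul, ih, pow_succ']

end SummableFamily

end HahnSeries

theorem Fin.sum_add_const {n : ℕ} (x : Fin n → ℤ) (t : ℤ) :
    ∑ i, (x i + t) = ∑ i, x i + n * t := by
  simp [Finset.sum_add_distrib]

theorem Fin.sum_add_const_sq {n : ℕ} (x : Fin n → ℤ) (t : ℤ) :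
    ∑ i, (x i + t) ^ 2 = ∑ i, x i ^ 2 + 2 * t * ∑ i, x i + n * t ^ 2 := by
  have h (i : Fin n) : (x i + t) ^ 2 = x i ^ 2 + 2 * t * x i + t ^ 2 := by ring
  simp only [h, Finset.sum_add_distrib, ← Finset.mul_sum, Finset.sum_const, Finset.card_univ,
    Fintype.card_fin, nsmul_eq_mul]

theorem isCoprime_two_mul_add_two_mul_mul {a b k : ℤ} (hab : IsCoprime a b) (hb : Odd b)
    (hk : IsCoprime k (2 * a + b)) : IsCoprime (2 * a + b) (2 * a * k) := by
  have h₂ : IsCoprime (2 * a + b) 2 := Int.isCoprime_two_right.mpr ((even_two_mul a).add_odd hb)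
  have ha : IsCoprime (2 * a + b) a := by
    rw [show 2 * a + b = b + a * 2 by ring]
    exact hab.symm.add_mul_left_left 2
  exact (h₂.mul_right ha).mul_right hk.symm

namespace ThetaVanish

open HahnSeries

theorem coeff_huff (M : ℤ) (G : LaurentSeries ℚ) (N : ℤ) :
    (huff M G).coeff N = if M ∣ N then G.coeff N else 0 := rfl

def thetaExponent (r s n : ℤ) : ℤ := r * (n * (n + 1) / 2) + s * (n * (n - 1) / 2)

theorem two_mul_thetaExponent (r s n : ℤ) :
    2 * thetaExponent r s n = (r + s) * n ^ 2 + (r - s) * n := by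
  obtain ⟨c, hc⟩ := Int.even_mul_succ_self n
  obtain ⟨d, hd⟩ := Int.even_mul_pred_self n
  have hc' : n * (n + 1) / 2 = c := by omega
  have hd' : n * (n - 1) / 2 = d := by omega
  rw [thetaExponent, hc', hd']
  linear_combination -r * hc - s * hd

theorem two_mul_sum_thetaExponent {n : ℕ} (r s : ℤ) (x : Fin n → ℤ) :
    2 * ∑ i, thetaExponent r s (x i) = (r + s) * ∑ i, x i ^ 2 + (r - s) * ∑ i, x i := by
  simp only [Finset.mul_sum, ← Finset.sum_add_distrib, two_mul_thetaExponent]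

theorem neg_sq_le_thetaExponent {r s : ℤ} (h : 0 < r + s) (n : ℤ) :
    -(r - s) ^ 2 ≤ thetaExponent r s n := by
  nlinarith [two_mul_thetaExponent r s n, sq_nonneg (2 * n + r - s), sq_nonneg (r - s),
    mul_nonneg (show (0 : ℤ) ≤ r + s - 1 by omega) (sq_nonneg n)]

theorem finite_thetaExponent_eq {r s : ℤ} (h : 0 < r + s) (N : ℤ) :
    {n | thetaExponent r s n = N}.Finite := by
  refine (Set.finite_Icc (-(2 * |N| + |r - s|)) (2 * |N| + |r - s|)).subset fun n hn => ?_
  have key := two_mul_thetaExponent r s n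
  rw [show thetaExponent r s n = N from hn] at key
  rw [Set.mem_Icc, ← abs_le]
  rcases (abs_nonneg n).eq_or_lt with h0 | h0
  · rw [← h0]; positivity
  have hsq : |n| * |n| ≤ 2 * |N| + |r - s| * |n| := by
    have : -(|r - s| * |n|) ≤ (r - s) * n := by rw [← abs_mul]; exact neg_abs_le _
    nlinarith [abs_mul_abs_self n, le_abs_self N,
      mul_nonneg (show (0 : ℤ) ≤ r + s - 1 by omega) (sq_nonneg n)]
  refine le_of_mul_le_mul_right ?_ h0
  nlinarith [abs_nonneg N]

def thetaFamily (ε r s : ℤ) : SummableFamily ℤ ℚ ℤ :=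
  if h : 0 < r + s then
    { toFun n := single (thetaExponent r s n) ((ε : ℚ) ^ n)
      isPWO_iUnion_support' := isPWO_of_subset_Ici (a := -(r - s) ^ 2) <| by
        simp only [Set.iUnion_subset_iff]
        intro n
        exact support_single_subset.trans <| Set.singleton_subset_iff.mpr
          (neg_sq_le_thetaExponent h n)
      finite_co_support' N := (finite_thetaExponent_eq h N).subset fun n hn => by
        by_contra hne
        exact hn (coeff_single_of_ne (Ne.symm hne)) }
  else 0

theorem thetaFamily_apply {ε r s : ℤ} (h : 0 < r + s) (n : ℤ) :
    thetaFamily ε r s n = single (thetaExponent r s n) ((ε : ℚ) ^ n) := by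
  rw [thetaFamily, dif_pos h]
  rfl

theorem theta_eq_hsum (ε r s : ℤ) : theta ε r s = (thetaFamily ε r s).hsum := by
  by_cases h : 0 < r + s
  · ext N
    rw [SummableFamily.coeff_hsum]
    simp only [theta, thetaFamily_apply h, dif_pos h, coeff_single, eq_comm (a := N)]
    rfl
  · rw [theta, thetaFamily, dif_neg h, dif_neg h, SummableFamily.hsum_zero]

section ThetaProduct

variable {A B : ℕ}

def imbalance (p : (Fin A → ℤ) × (Fin B → ℤ)) : ℤ := ∑ i, p.1 i - ∑ j, p.2 j

def shift (c : ℤ) (p : (Fin A → ℤ) × (Fin B → ℤ)) : (Fin A → ℤ) × (Fin B → ℤ) :=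
  (fun i => p.1 i + 2 * c, fun j => p.2 j - c)

theorem shift_shift (c c' : ℤ) (p : (Fin A → ℤ) × (Fin B → ℤ)) :
    shift c (shift c' p) = shift (c + c') p := by
  ext i <;> simp only [shift] <;> ring

theorem imbalance_shift (c : ℤ) (p : (Fin A → ℤ) × (Fin B → ℤ)) :
    imbalance (shift c p) = imbalance p + (2 * A + B) * c := by
  simp only [imbalance, shift, Finset.sum_add_distrib, Finset.sum_sub_distrib, Finset.sum_const,
    Finset.card_univ, Fintype.card_fin, nsmul_eq_mul]
  ring

/-- The `c` with `3A - 2 * imbalance p = (2A + B)(c + 1)` when the division is exact; the rounded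
division still makes `reflection` an involution on all pairs. -/
def reflectionShift (p : (Fin A → ℤ) × (Fin B → ℤ)) : ℤ :=
  (3 * A - 2 * imbalance p) / (2 * A + B) - 1

def reflection (p : (Fin A → ℤ) × (Fin B → ℤ)) : (Fin A → ℤ) × (Fin B → ℤ) :=
  shift (reflectionShift p) p

theorem reflectionShift_reflection (hM : (2 * A + B : ℤ) ≠ 0) (p : (Fin A → ℤ) × (Fin B → ℤ)) :
    reflectionShift (reflection p) = -reflectionShift p := by
  rw [reflectionShift, reflection, imbalance_shift,
    show 3 * (A : ℤ) - 2 * (imbalance p + (2 * A + B) * reflectionShift p)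
      = 3 * A - 2 * imbalance p + (2 * A + B) * (-2 * reflectionShift p) by ring,
    Int.add_mul_ediv_left _ _ hM, reflectionShift]
  ring

theorem reflection_involutive (hM : (2 * A + B : ℤ) ≠ 0) :
    Function.Involutive (reflection (A := A) (B := B)) := by
  intro p
  rw [reflection, reflectionShift_reflection hM, reflection, shift_shift, neg_add_cancel]
  ext i <;> simp [shift]

theorem sub_eq_mul_reflectionShift_add_one {p : (Fin A → ℤ) × (Fin B → ℤ)}
    (h : (2 * A + B : ℤ) ∣ 3 * A - 2 * imbalance p) :
    3 * A - 2 * imbalance p = (2 * A + B) * (reflectionShift p + 1) := by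
  rw [reflectionShift, sub_add_cancel, Int.mul_ediv_cancel' h]

theorem dvd_imbalance_reflection_iff {p : (Fin A → ℤ) × (Fin B → ℤ)} :
    (2 * A + B : ℤ) ∣ 3 * A - 2 * imbalance (reflection p)
      ↔ (2 * A + B : ℤ) ∣ 3 * A - 2 * imbalance p := by
  rw [reflection, imbalance_shift,
    show 3 * (A : ℤ) - 2 * (imbalance p + (2 * A + B) * reflectionShift p)
      = 3 * A - 2 * imbalance p - (2 * A + B) * (2 * reflectionShift p) by ring,
    dvd_sub_left (dvd_mul_right _ _)]

theorem odd_reflectionShift (hA : Even A) (hB : Odd B) {p : (Fin A → ℤ) × (Fin B → ℤ)}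
    (h : (2 * A + B : ℤ) ∣ 3 * A - 2 * imbalance p) : Odd (reflectionShift p) := by
  have hM : Odd (2 * A + B : ℤ) := (even_two_mul _).add_odd (by exact_mod_cast hB)
  have heven : Even ((2 * A + B : ℤ) * (reflectionShift p + 1)) := by
    rw [← sub_eq_mul_reflectionShift_add_one h]
    exact ((Int.even_coe_nat A).mpr hA).mul_left 3 |>.sub (even_two_mul _)
  rcases Int.even_mul.mp heven with hM' | hc
  · exact absurd hM' (Int.not_even_iff_odd.mpr hM)
  · exact Int.not_even_iff_odd.mp (Int.even_add_one.mp hc)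

def productExponent (k μ : ℤ) (p : (Fin A → ℤ) × (Fin B → ℤ)) : ℤ :=
  3 * A ^ 2 * k + (∑ i, thetaExponent (B * k) (μ * (2 * A + B) - B * k) (p.1 i)
    + ∑ j, thetaExponent (2 * A * k) (2 * μ * (2 * A + B) - 2 * A * k) (p.2 j))

theorem two_mul_productExponent (k μ : ℤ) (p : (Fin A → ℤ) × (Fin B → ℤ)) :
    2 * productExponent k μ p = 2 * A * k * (3 * A - 2 * imbalance p)
      + (2 * A + B) * (μ * (∑ i, p.1 i ^ 2 - ∑ i, p.1 i) + 2 * k * ∑ i, p.1 i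
        + 2 * μ * (∑ j, p.2 j ^ 2 - ∑ j, p.2 j)) := by
  have h₁ := two_mul_sum_thetaExponent (B * k) (μ * (2 * A + B) - B * k) p.1
  have h₂ := two_mul_sum_thetaExponent (2 * A * k) (2 * μ * (2 * A + B) - 2 * A * k) p.2
  rw [productExponent, imbalance]
  linear_combination h₁ + h₂

theorem dvd_of_dvd_productExponent {k μ : ℤ} (hcop : IsCoprime (2 * A + B : ℤ) (2 * A * k))
    {p : (Fin A → ℤ) × (Fin B → ℤ)} (h : (2 * A + B : ℤ) ∣ productExponent k μ p) :
    (2 * A + B : ℤ) ∣ 3 * A - 2 * imbalance p := by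
  refine hcop.dvd_of_dvd_mul_left ?_
  rw [eq_sub_of_add_eq (two_mul_productExponent k μ p).symm]
  exact dvd_sub (h.mul_left 2) (dvd_mul_right _ _)

theorem productExponent_shift (k μ : ℤ) {c : ℤ} {p : (Fin A → ℤ) × (Fin B → ℤ)}
    (hc : 3 * A - 2 * imbalance p = (2 * A + B) * (c + 1)) :
    productExponent k μ (shift c p) = productExponent k μ p := by
  refine mul_left_cancel₀ (two_ne_zero (α := ℤ)) ?_
  rw [two_mul_productExponent, two_mul_productExponent, imbalance_shift]
  simp only [shift, imbalance, sub_eq_add_neg _ c, Fin.sum_add_const, Fin.sum_add_const_sq]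
    at hc ⊢
  linear_combination (-2 * μ * (2 * A + B) * c) * hc

def signCoeff (ε : ℤ) (p : (Fin A → ℤ) × (Fin B → ℤ)) : ℚ :=
  (∏ i, (ε : ℚ) ^ p.1 i) * ∏ j, (-1 : ℚ) ^ p.2 j

theorem signCoeff_shift {ε : ℤ} (hε : ε ^ 2 = 1) (hB : Odd B) {c : ℤ} (hc : Odd c)
    (p : (Fin A → ℤ) × (Fin B → ℤ)) : signCoeff ε (shift c p) = -signCoeff ε p := by
  have hε₀ : (ε : ℚ) ≠ 0 := by rintro h; simp_all
  have h₁ (n : ℤ) : (ε : ℚ) ^ (n + 2 * c) = (ε : ℚ) ^ n := by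
    rw [zpow_add₀ hε₀, zpow_mul, zpow_two, ← sq, show (ε : ℚ) ^ 2 = 1 by exact_mod_cast hε,
      one_zpow, mul_one]
  have h₂ (n : ℤ) : (-1 : ℚ) ^ (n - c) = -(-1) ^ n := by
    rw [zpow_sub₀ (by norm_num), hc.neg_one_zpow, div_neg, div_one]
  simp only [signCoeff, shift, h₁, h₂, Finset.prod_neg, Finset.card_univ, Fintype.card_fin,
    hB.neg_one_pow]
  ring

def thetaProductFamily (A B : ℕ) (ε k μ : ℤ) :
    SummableFamily ℤ ℚ ((Fin A → ℤ) × (Fin B → ℤ)) :=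
  single (3 * A ^ 2 * k) (1 : ℚ) •
    ((thetaFamily ε (B * k) (μ * (2 * A + B) - B * k)).pow A).mul
      ((thetaFamily (-1) (2 * A * k) (2 * μ * (2 * A + B) - 2 * A * k)).pow B)

theorem thetaProductFamily_apply {ε k μ : ℤ} (h : 0 < μ * (2 * A + B))
    (p : (Fin A → ℤ) × (Fin B → ℤ)) :
    thetaProductFamily A B ε k μ p = single (productExponent k μ p) (signCoeff ε p) := by
  rw [thetaProductFamily, SummableFamily.smul_apply, of_symm_smul_of_eq_mul,
    SummableFamily.mul_toFun, SummableFamily.pow_apply, SummableFamily.pow_apply]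
  simp only [thetaFamily_apply (show 0 < B * k + (μ * (2 * A + B) - B * k) by linarith),
    thetaFamily_apply (show 0 < 2 * A * k + (2 * μ * (2 * A + B) - 2 * A * k) by linarith),
    prod_single, single_mul_single, one_mul, productExponent, signCoeff, Int.cast_neg,
    Int.cast_one]

theorem single_mul_theta_pow_mul_theta_pow (ε k μ : ℤ) :
    single (3 * A ^ 2 * k) (1 : ℚ) * theta ε (B * k) (μ * (2 * A + B) - B * k) ^ A
        * theta (-1) (2 * A * k) (2 * μ * (2 * A + B) - 2 * A * k) ^ B
      = (thetaProductFamily A B ε k μ).hsum := by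
  rw [thetaProductFamily, SummableFamily.hsum_smul, SummableFamily.hsum_mul,
    SummableFamily.hsum_pow, SummableFamily.hsum_pow, theta_eq_hsum, theta_eq_hsum, mul_assoc]

theorem huff_single_mul_theta_pow_mul_theta_pow (hA : Even A) (hB : Odd B) {ε k μ : ℤ}
    (hε : ε ^ 2 = 1) (hμ : 0 < μ) (hcop : IsCoprime (2 * A + B : ℤ) (2 * A * k)) :
    huff (2 * A + B) (single (3 * A ^ 2 * k) (1 : ℚ)
        * theta ε (B * k) (μ * (2 * A + B) - B * k) ^ A
        * theta (-1) (2 * A * k) (2 * μ * (2 * A + B) - 2 * A * k) ^ B) = 0 := by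
  have hM : (0 : ℤ) < 2 * A + B := by have := hB.pos; omega
  ext N
  rw [coeff_huff, single_mul_theta_pow_mul_theta_pow, HahnSeries.coeff_zero, ite_eq_right_iff]
  intro hN
  refine SummableFamily.coeff_hsum_eq_zero_of_involutive _ (reflection_involutive hM.ne')
    fun p => ?_
  simp only [thetaProductFamily_apply (mul_pos hμ hM), coeff_single]
  by_cases hp : (2 * A + B : ℤ) ∣ 3 * A - 2 * imbalance p
  · rw [reflection, productExponent_shift k μ (sub_eq_mul_reflectionShift_add_one hp),
      signCoeff_shift hε hB (odd_reflectionShift hA hB hp)]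
    split_ifs <;> simp
  · have h₁ : N ≠ productExponent k μ p :=
      fun h => hp (dvd_of_dvd_productExponent hcop (h ▸ hN))
    have h₂ : N ≠ productExponent k μ (reflection p) :=
      fun h => hp (dvd_imbalance_reflection_iff.mp (dvd_of_dvd_productExponent hcop (h ▸ hN)))
    rw [if_neg h₁, if_neg h₂, neg_zero]

end ThetaProduct

/-- **Theorem (Type II, eq. (1.14))**: with `gcd(2ℓ+2, 2m+1) = 1`,
`M = 4ℓ + 2m + 5` and `σ = 3(2ℓ+2)²k`, for `(κ, λ) ∈ {(0,1), (1,1)}`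
and `gcd(k, M) = 1`,
`H_M(q^σ · f((-1)^κ q^{(2m+1)k}, (-1)^κ q^{μM-(2m+1)k})^{2ℓ+2} ·
  f((-1)^λ q^{(4ℓ+4)k}, (-1)^λ q^{2μM-(4ℓ+4)k})^{2m+1}) = 0`. -/
theorem statement10 (μ ℓ m k M σ : ℤ) (hμ : 1 ≤ μ) (hℓ : 0 ≤ ℓ) (hm : 0 ≤ m)
    (hcop : Int.gcd (2 * ℓ + 2) (2 * m + 1) = 1)
    (hM : M = 4 * ℓ + 2 * m + 5) (hσ : σ = 3 * (2 * ℓ + 2) ^ 2 * k)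
    (κ lam : ℕ) (hκlam : (κ = 0 ∧ lam = 1) ∨ (κ = 1 ∧ lam = 1))
    (hk : Int.gcd k M = 1) :
    huff M (HahnSeries.single σ (1 : ℚ)
      * theta ((-1) ^ κ) ((2 * m + 1) * k) (μ * M - (2 * m + 1) * k) ^ (2 * ℓ + 2)
      * theta ((-1) ^ lam) ((4 * ℓ + 4) * k)
          (2 * μ * M - (4 * ℓ + 4) * k) ^ (2 * m + 1)) = 0 := by
  obtain rfl : lam = 1 := by omega
  obtain ⟨A, hA⟩ : ∃ A : ℕ, (A : ℤ) = 2 * ℓ + 2 := ⟨_, Int.toNat_of_nonneg (by omega)⟩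
  obtain ⟨B, hB⟩ : ∃ B : ℕ, (B : ℤ) = 2 * m + 1 := ⟨_, Int.toNat_of_nonneg (by omega)⟩
  obtain rfl : M = 2 * A + B := by omega
  subst hσ
  have hAeven : Even A := by rw [← Int.even_coe_nat, hA]; exact ⟨ℓ + 1, by ring⟩
  have hBodd : Odd B := by rw [← Int.odd_coe_nat, hB]; exact ⟨m, by ring⟩
  have hε : ((-1 : ℤ) ^ κ) ^ 2 = 1 := by rw [← pow_mul, mul_comm, pow_mul]; norm_num
  rw [← hA, ← hB] at hcop
  have hcop' : IsCoprime (2 * A + B : ℤ) (2 * A * k) :=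
    isCoprime_two_mul_add_two_mul_mul (Int.isCoprime_iff_gcd_eq_one.mpr hcop)
      (by exact_mod_cast hBodd) (Int.isCoprime_iff_gcd_eq_one.mpr hk)
  rw [show (4 * ℓ + 4) * k = 2 * (2 * ℓ + 2) * k by ring, ← hA, ← hB, zpow_natCast,
    zpow_natCast, pow_one]
  exact huff_single_mul_theta_pow_mul_theta_pow hAeven hBodd hε (by omega) hcop'

end ThetaVanish
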